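/- For every n ≥ 0, O_(n+1) is βη-equivalent to λx. x (x (… (x (λy. y (x y)))…)) with n applications of x; hence the O combinator does not have the ρ-property. -/
import Mathlib


/-- Untyped lambda terms in de Bruijn representation. -/
inductive Lam where
  | var : Nat → Lam
  | app : Lam → Lam → Lam
  | lam : Lam → Lam
deriving DecidableEq

namespace Lam

/-- Lift (shift by one) all free variables with index ≥ `c`. -/
def lift (c : Nat) : Lam → Lam
  | var n => if n < c then var n else var (n + 1)
  | app a b => app (lift c a) (lift c b)
  | lam a => lam (lift (c + 1) a)

/-- Substitute `s` for the free variable with index `d`. -/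
def subst (d : Nat) (s : Lam) : Lam → Lam
  | var n => if n = d then s else if d < n then var (n - 1) else var n
  | app a b => app (subst d s a) (subst d s b)
  | lam a => lam (subst (d + 1) (lift 0 s) a)

/-- One-step βη-reduction (compatible closure of β and η). -/
inductive Step : Lam → Lam → Prop
  | beta (a b : Lam) : Step (app (lam a) b) (subst 0 b a)
  | eta (a : Lam) : Step (lam (app (lift 0 a) (var 0))) a
  | appL {a a' : Lam} (b : Lam) : Step a a' → Step (app a b) (app a' b)
  | appR (a : Lam) {b b' : Lam} : Step b b' → Step (app a b) (app a b')
  | xi {a a' : Lam} : Step a a' → Step (lam a) (lam a')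

/-- βη-equivalence: the equivalence relation generated by one-step βη-reduction. -/
def BetaEtaEq (a b : Lam) : Prop := Relation.EqvGen Step a b

/-- The B combinator λf.λg.λx. f (g x). -/
def B : Lam := lam (lam (lam (app (var 2) (app (var 1) (var 0)))))

/-- `flat X n` is the (n+1)-fold flat left application, i.e. `X_(n+1)`:
`flat X 0 = X = X_(1)` and `flat X (n+1) = (flat X n) X = X_(n+2)`. -/
def flat (X : Lam) : Nat → Lam
  | 0 => X
  | n + 1 => app (flat X n) X

theorem lift_lift (a : Lam) : ∀ c d, c ≤ d → lift c (lift d a) = lift (d+1) (lift c a) := by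
  induction a with
  | var n =>
    intro c d h
    simp only [lift]
    split_ifs <;> simp only [lift] <;> split_ifs <;> first | rfl | omega | (congr 1; omega)
  | app a b iha ihb => intro c d h; simp only [lift, iha c d h, ihb c d h]
  | lam a ih => intro c d h; simp only [lift, ih (c+1) (d+1) (by omega)]

theorem lift_subst_le (a : Lam) : ∀ c d s, c ≤ d →
    lift c (subst d s a) = subst (d+1) (lift c s) (lift c a) := by
  induction a with
  | var n =>
    intro c d s h
    simp only [subst, lift]
    split_ifs <;> simp only [subst, lift] <;> split_ifs <;>
      first | rfl | omega | (congr 1; omega)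
  | app a b iha ihb => intro c d s h; simp only [lift, subst, iha c d s h, ihb c d s h]
  | lam a ih =>
    intro c d s h
    simp only [lift, subst, ih (c+1) (d+1) (lift 0 s) (by omega)]
    rw [lift_lift s 0 c (by omega)]

theorem lift_subst_ge (a : Lam) : ∀ c d s, d ≤ c →
    lift c (subst d s a) = subst d (lift c s) (lift (c+1) a) := by
  induction a with
  | var n =>
    intro c d s h
    simp only [subst, lift]
    split_ifs <;> simp only [subst, lift] <;> split_ifs <;>
      first | rfl | omega | (congr 1; omega)
  | app a b iha ihb => intro c d s h; simp only [lift, subst, iha c d s h, ihb c d s h]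
  | lam a ih =>
    intro c d s h
    simp only [lift, subst, ih (c+1) (d+1) (lift 0 s) (by omega)]
    rw [lift_lift s 0 c (by omega)]

theorem subst_lift (a : Lam) : ∀ d s, subst d s (lift d a) = a := by
  induction a with
  | var n =>
    intro d s
    simp only [lift]
    split_ifs <;> simp only [subst] <;> split_ifs <;> first | rfl | omega | (congr 1; omega)
  | app a b iha ihb => intro d s; simp only [lift, subst, iha, ihb]
  | lam a ih => intro d s; simp only [lift, subst, ih]

theorem subst_subst (a : Lam) : ∀ c d s t, c ≤ d →
    subst d s (subst c t a) = subst c (subst d s t) (subst (d+1) (lift c s) a) := by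
  induction a with
  | var n =>
    intro c d s t h
    simp only [subst]
    split_ifs <;> (try simp only [subst]) <;> (try split_ifs) <;>
      first
      | rfl
      | omega
      | (congr 1; omega)
      | exact (subst_lift s c (subst d s t)).symm
      | exact subst_lift s c (subst d s t)
  | app a b iha ihb =>
    intro c d s t h; simp only [subst, iha _ _ _ _ h, ihb _ _ _ _ h]
  | lam a ih =>
    intro c d s t h
    simp only [subst, ih (c+1) (d+1) (lift 0 s) (lift 0 t) (by omega)]
    rw [lift_subst_le t 0 d s (by omega), lift_lift s 0 c (by omega)]

theorem subst_var_lift (a : Lam) : ∀ d, subst d (var d) (lift (d+1) a) = a := by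
  induction a with
  | var n =>
    intro d
    simp only [lift]
    split_ifs <;> simp only [subst] <;> split_ifs <;> first | rfl | omega | (congr 1; omega)
  | app a b iha ihb => intro d; simp only [lift, subst, iha, ihb]
  | lam a ih =>
    intro d
    simp only [lift, subst, if_neg (Nat.not_lt_zero d)]
    rw [ih (d+1)]

def size : Lam → Nat
  | var _ => 1
  | app a b => size a + size b + 1
  | lam a => size a + 1

theorem size_pos (a : Lam) : 0 < size a := by
  cases a <;> simp [size]

theorem size_lift (a : Lam) : ∀ c, size (lift c a) = size a := by
  induction a with
  | var n => intro c; simp only [lift]; split <;> rfl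
  | app a b iha ihb => intro c; simp [lift, size, iha, ihb]
  | lam a ih => intro c; simp [lift, size, ih]

/-- Does variable `c` occur free? -/
def hasVar (c : Nat) : Lam → Bool
  | var n => n == c
  | app a b => hasVar c a || hasVar c b
  | lam a => hasVar (c+1) a

/-- Remove variable `c` (decrement all variables above `c`). -/
def down (c : Nat) : Lam → Lam
  | var n => if n < c then var n else var (n - 1)
  | app a b => app (down c a) (down c b)
  | lam a => lam (down (c+1) a)

theorem size_down (a : Lam) : ∀ c, size (down c a) = size a := by
  induction a with
  | var n => intro c; simp only [down]; split <;> rfl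
  | app a b iha ihb => intro c; simp [down, size, iha, ihb]
  | lam a ih => intro c; simp [down, size, ih]

theorem down_lift (a : Lam) : ∀ c, down c (lift c a) = a := by
  induction a with
  | var n =>
    intro c; simp only [lift]
    split_ifs <;> simp only [down] <;> split_ifs <;> first | rfl | omega | (congr 1; omega)
  | app a b iha ihb => intro c; simp [lift, down, iha, ihb]
  | lam a ih => intro c; simp [lift, down, ih]

theorem hasVar_lift_self (a : Lam) : ∀ c, hasVar c (lift c a) = false := by
  induction a with
  | var n =>
    intro c; simp only [lift]
    split_ifs <;> simp only [hasVar] <;> simp <;> omega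
  | app a b iha ihb => intro c; simp [lift, hasVar, iha, ihb]
  | lam a ih => intro c; simp [lift, hasVar, ih]

theorem hasVar_lift_lt (a : Lam) : ∀ k c, k < c → hasVar k (lift c a) = hasVar k a := by
  induction a with
  | var n =>
    intro k c h; simp only [lift]
    split_ifs <;> simp only [hasVar] <;> simp <;> omega
  | app a b iha ihb => intro k c h; simp [lift, hasVar, iha _ _ h, ihb _ _ h]
  | lam a ih => intro k c h; simp [lift, hasVar, ih (k+1) (c+1) (by omega)]

theorem lift_down (a : Lam) : ∀ c, hasVar c a = false → lift c (down c a) = a := by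
  induction a with
  | var n =>
    intro c h
    simp only [hasVar, beq_eq_false_iff_ne, ne_eq] at h
    simp only [down]
    split_ifs <;> simp only [lift] <;> split_ifs <;> first | rfl | omega | (congr 1; omega)
  | app a b iha ihb =>
    intro c h
    simp only [hasVar, Bool.or_eq_false_iff] at h
    simp [down, lift, iha _ h.1, ihb _ h.2]
  | lam a ih =>
    intro c h
    simp only [hasVar] at h
    simp [down, lift, ih _ h]

theorem lift_inj : ∀ a b c, lift c a = lift c b → a = b := by
  intro a
  induction a with
  | var n =>
    intro b c h
    cases b <;> simp only [lift] at h <;> (try split_ifs at h) <;>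
      first
      | (injection h with h; omega)
      | (injection h with h; subst h; rfl)
      | rfl
      | (congr 1; injection h with h; omega)
  | app a1 a2 ih1 ih2 =>
    intro b c h
    cases b <;> simp only [lift] at h
    · split_ifs at h <;> cases h
    · injection h with h1 h2; rw [ih1 _ _ h1, ih2 _ _ h2]
    · cases h
  | lam a ih =>
    intro b c h
    cases b <;> simp only [lift] at h
    · split_ifs at h <;> cases h
    · cases h
    · injection h with h; rw [ih _ _ h]

/-- Parallel βη-reduction. -/
inductive Par : Lam → Lam → Prop
  | var (n : Nat) : Par (var n) (var n)
  | app {a a' b b' : Lam} : Par a a' → Par b b' → Par (app a b) (app a' b')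
  | lam {a a' : Lam} : Par a a' → Par (lam a) (lam a')
  | beta {a a' b b' : Lam} : Par a a' → Par b b' → Par (app (lam a) b) (subst 0 b' a')
  | eta {a a' : Lam} : Par a a' → Par (lam (app (lift 0 a) (var 0))) a'

theorem Par.refl : ∀ a : Lam, Par a a := by
  intro a
  induction a with
  | var n => exact Par.var n
  | app a b iha ihb => exact Par.app iha ihb
  | lam a ih => exact Par.lam ih

theorem step_par {a b : Lam} (h : Step a b) : Par a b := by
  induction h with
  | beta a b => exact Par.beta (Par.refl a) (Par.refl b)
  | eta a => exact Par.eta (Par.refl a)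
  | appL b _ ih => exact Par.app ih (Par.refl b)
  | appR a _ ih => exact Par.app (Par.refl a) ih
  | xi _ ih => exact Par.lam ih

theorem par_lift {a a' : Lam} (h : Par a a') : ∀ c, Par (lift c a) (lift c a') := by
  induction h with
  | var n => intro c; exact Par.refl _
  | app _ _ iha ihb => intro c; exact Par.app (iha c) (ihb c)
  | lam _ ih => intro c; exact Par.lam (ih (c+1))
  | @beta a a' b b' _ _ iha ihb =>
    intro c
    have : lift c (subst 0 b' a') = subst 0 (lift c b') (lift (c+1) a') :=
      lift_subst_ge a' c 0 b' (by omega)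
    rw [this]
    exact Par.beta (iha (c+1)) (ihb c)
  | @eta a a' _ ih =>
    intro c
    have h1 : lift (c+1) (lift 0 a) = lift 0 (lift c a) := (lift_lift a 0 c (by omega)).symm
    have h2 : lift (c+1) (var 0) = var 0 := by simp [lift]
    show Par (lam (app (lift (c+1) (lift 0 a)) (lift (c+1) (var 0)))) (lift c a')
    rw [h1, h2]
    exact Par.eta (ih c)

theorem par_subst {a a' : Lam} (h : Par a a') :
    ∀ d {s s' : Lam}, Par s s' → Par (subst d s a) (subst d s' a') := by
  induction h with
  | var n =>
    intro d s s' hs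
    simp only [subst]
    split_ifs <;> first | exact hs | exact Par.refl _
  | app _ _ iha ihb => intro d s s' hs; exact Par.app (iha d hs) (ihb d hs)
  | lam _ ih => intro d s s' hs; exact Par.lam (ih (d+1) (par_lift hs 0))
  | @beta a a' b b' _ _ iha ihb =>
    intro d s s' hs
    have : subst d s' (subst 0 b' a') =
        subst 0 (subst d s' b') (subst (d+1) (lift 0 s') a') :=
      subst_subst a' 0 d s' b' (by omega)
    rw [this]
    exact Par.beta (iha (d+1) (par_lift hs 0)) (ihb d hs)
  | @eta a a' _ ih =>
    intro d s s' hs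
    have h1 : subst (d+1) (lift 0 s) (lift 0 a) = lift 0 (subst d s a) :=
      (lift_subst_le a 0 d s (by omega)).symm
    have h2 : subst (d+1) (lift 0 s) (var 0) = var 0 := by
      simp only [subst]; rw [if_neg (by omega), if_neg (by omega)]
    show Par (lam (app (subst (d+1) (lift 0 s) (lift 0 a)) (subst (d+1) (lift 0 s) (var 0))))
      (subst d s' a')
    rw [h1, h2]
    exact Par.eta (ih d hs)

theorem par_lift_inv : ∀ {t b : Lam}, Par t b → ∀ c a, t = lift c a →
    ∃ a', b = lift c a' ∧ Par a a' := by
  intro t b h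
  induction h with
  | var n =>
    intro c a ha
    exact ⟨a, ha, Par.refl a⟩
  | @app t1 t1' t2 t2' _ _ ih1 ih2 =>
    intro c a ha
    cases a <;> simp only [lift] at ha
    · split_ifs at ha <;> cases ha
    · obtain ⟨e1, e2⟩ := Lam.app.inj ha
      obtain ⟨a1', hb1, hp1⟩ := ih1 c _ e1
      obtain ⟨a2', hb2, hp2⟩ := ih2 c _ e2
      exact ⟨Lam.app a1' a2', by rw [hb1, hb2]; rfl, Par.app hp1 hp2⟩
    · cases ha
  | @lam t1 t1' _ ih =>
    intro c a ha
    cases a <;> simp only [lift] at ha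
    · split_ifs at ha <;> cases ha
    · cases ha
    · obtain e := Lam.lam.inj ha
      obtain ⟨a1', hb1, hp1⟩ := ih (c+1) _ e
      exact ⟨Lam.lam a1', by rw [hb1]; rfl, Par.lam hp1⟩
  | @beta m m' n n' _ _ ih1 ih2 =>
    intro c a ha
    cases a <;> simp only [lift] at ha
    · split_ifs at ha <;> cases ha
    · obtain ⟨e1, e2⟩ := Lam.app.inj ha
      rename_i a1 a2
      cases a1 <;> simp only [lift] at e1
      · split_ifs at e1 <;> cases e1
      · cases e1
      · obtain e := Lam.lam.inj e1
        rename_i a0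
        obtain ⟨m0', hm, hpm⟩ := ih1 (c+1) a0 e
        obtain ⟨n0', hn, hpn⟩ := ih2 c a2 e2
        refine ⟨subst 0 n0' m0', ?_, Par.beta hpm hpn⟩
        rw [hm, hn]
        exact (lift_subst_ge m0' c 0 n0' (by omega)).symm
    · cases ha
  | @eta w w' _ ih =>
    intro c a ha
    cases a <;> simp only [lift] at ha
    · split_ifs at ha <;> cases ha
    · cases ha
    · rename_i a0
      obtain e := Lam.lam.inj ha
      cases a0 <;> simp only [lift] at e
      · split_ifs at e <;> cases e
      · obtain ⟨e1, e2⟩ := Lam.app.inj e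
        rename_i u v
        -- e1 : lift 0 w = lift (c+1) u, e2 : var 0 = lift (c+1) v
        have hv : v = var 0 := by
          cases v <;> simp only [lift] at e2
          · split_ifs at e2 <;> injection e2 with e2 <;> (congr 1; omega)
          · cases e2
          · cases e2
        subst hv
        have hu0 : hasVar 0 u = false := by
          have : hasVar 0 (lift (c+1) u) = hasVar 0 u := hasVar_lift_lt u 0 (c+1) (by omega)
          rw [← this, ← e1, hasVar_lift_self]
        set u0 := down 0 u with hu0def
        have hu : u = lift 0 u0 := (lift_down u 0 hu0).symm
        have hw : w = lift c u0 := by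
          apply lift_inj _ _ 0
          rw [e1, hu, lift_lift u0 0 c (by omega)]
        obtain ⟨b0, hb, hpb⟩ := ih c u0 hw
        rw [hu]
        exact ⟨b0, hb, Par.eta hpb⟩
      · cases e


/-- Complete development of all β- and η-redexes. -/
def cd : Lam → Lam
  | var n => var n
  | app (lam a) b => subst 0 (cd b) (cd a)
  | app (var n) b => app (var n) (cd b)
  | app (app a1 a2) b => app (cd (app a1 a2)) (cd b)
  | lam (app f (var 0)) =>
      if hasVar 0 f then lam (cd (app f (var 0))) else cd (down 0 f)
  | lam (var n) => lam (var n)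
  | lam (app f (var (k+1))) => lam (cd (app f (var (k+1))))
  | lam (app f (app b1 b2)) => lam (cd (app f (app b1 b2)))
  | lam (app f (lam b)) => lam (cd (app f (lam b)))
  | lam (lam a) => lam (cd (lam a))
termination_by a => size a
decreasing_by all_goals (simp [size, size_down]; try omega)

theorem cd_var (n : Nat) : cd (var n) = var n := by simp [cd]
theorem cd_app_lam (a b : Lam) : cd (app (lam a) b) = subst 0 (cd b) (cd a) := by simp [cd]
theorem cd_app_var (n : Nat) (b : Lam) : cd (app (var n) b) = app (var n) (cd b) := by simp [cd]
theorem cd_app_app (a1 a2 b : Lam) :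
    cd (app (app a1 a2) b) = app (cd (app a1 a2)) (cd b) := by simp [cd]
theorem cd_lam_eta (f : Lam) (h : hasVar 0 f = false) :
    cd (lam (app f (var 0))) = cd (down 0 f) := by simp [cd, h]
theorem cd_lam_eta' (f : Lam) (h : hasVar 0 f = true) :
    cd (lam (app f (var 0))) = lam (cd (app f (var 0))) := by simp [cd, h]

/-- Detect η-redex bodies. -/
def etaF? : Lam → Option Lam
  | app f (var 0) => some f
  | _ => none

theorem etaF?_some {m f : Lam} (h : etaF? m = some f) : m = app f (var 0) := by
  cases m with
  | var n => simp [etaF?] at h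
  | lam a => simp [etaF?] at h
  | app g v =>
    cases v with
    | var k =>
      cases k with
      | zero => simp [etaF?] at h; rw [h]
      | succ k => simp [etaF?] at h
    | app v1 v2 => simp [etaF?] at h
    | lam v1 => simp [etaF?] at h

theorem cd_lam_plain (m : Lam) (h : etaF? m = none) : cd (lam m) = lam (cd m) := by
  cases m with
  | var n => simp [cd]
  | lam a => simp [cd]
  | app g v =>
    cases v with
    | var k =>
      cases k with
      | zero => simp [etaF?] at h
      | succ k => simp [cd]
    | app v1 v2 => simp [cd]
    | lam v1 => simp [cd]

theorem etaF?_lift {m : Lam} (c : Nat) (h : etaF? m = none) :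
    etaF? (lift (c+1) m) = none := by
  cases m with
  | var n => simp only [lift]; split <;> simp [etaF?]
  | lam a => simp [lift, etaF?]
  | app g v =>
    cases v with
    | var k =>
      cases k with
      | zero => simp [etaF?] at h
      | succ k =>
        simp only [lift]
        split <;> simp [etaF?]
    | app v1 v2 => simp [lift, etaF?]
    | lam v1 => simp [lift, etaF?]

theorem lift_var0 (c : Nat) : lift (c+1) (var 0) = var 0 := by
  simp only [lift]; rw [if_pos (Nat.succ_pos c)]

theorem cd_lift : ∀ N a, size a ≤ N → ∀ c, cd (lift c a) = lift c (cd a) := by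
  intro N
  induction N with
  | zero => intro a ha; exact absurd (lt_of_lt_of_le (size_pos a) ha) (by omega)
  | succ N IH =>
    intro a ha c
    match a with
    | var n =>
      simp only [lift]
      split <;> simp only [cd_var] <;> simp only [lift] <;> split <;> first | rfl | omega
    | app (var n) b =>
      have hb : size b ≤ N := by simp [size] at ha; omega
      simp only [lift]
      split <;> rw [cd_app_var] <;> rw [cd_app_var] <;> rw [IH b hb c] <;>
        simp only [lift] <;> split <;> first | rfl | omega
    | app (app a1 a2) b =>
      have h1 : size (app a1 a2) ≤ N := by simp [size] at ha ⊢; omega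
      have hb : size b ≤ N := by simp [size] at ha; omega
      have e1 := IH (app a1 a2) h1 c
      simp only [lift] at e1
      simp only [lift]
      rw [cd_app_app, cd_app_app, e1, IH b hb c]
      rfl
    | app (lam a0) b =>
      have h1 : size a0 ≤ N := by simp [size] at ha; omega
      have hb : size b ≤ N := by simp [size] at ha; omega
      simp only [lift]
      rw [cd_app_lam, cd_app_lam, IH _ h1 (c+1), IH b hb c]
      exact (lift_subst_ge (cd a0) c 0 (cd b) (by omega)).symm
    | lam m =>
      have hm : size m ≤ N := by simp [size] at ha; omega
      match hE : etaF? m with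
      | none =>
        rw [cd_lam_plain m hE]
        simp only [lift]
        rw [cd_lam_plain _ (etaF?_lift c hE), IH m hm (c+1)]
      | some f =>
        have hmf := etaF?_some hE
        subst hmf
        have hf : size f ≤ N := by simp [size] at hm ⊢; omega
        have hsz : size (app f (var 0)) ≤ N := hm
        have hhv : hasVar 0 (lift (c+1) f) = hasVar 0 f := hasVar_lift_lt f 0 (c+1) (by omega)
        have hL : lift c (lam (app f (var 0))) = lam (app (lift (c+1) f) (var 0)) := by
          simp only [lift]; norm_num
        rw [hL]
        cases hvf : hasVar 0 f with
        | true =>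
          rw [cd_lam_eta' _ (by rw [hhv, hvf]), cd_lam_eta' _ hvf]
          have e := IH (app f (var 0)) hsz (c+1)
          have hA : lift (c+1) (app f (var 0)) = app (lift (c+1) f) (var 0) := by
            simp only [lift]; norm_num
          rw [hA] at e
          rw [e]
          rfl
        | false =>
          rw [cd_lam_eta _ (by rw [hhv, hvf]), cd_lam_eta _ hvf]
          have hdl : down 0 (lift (c+1) f) = lift c (down 0 f) := by
            conv_lhs => rw [← lift_down f 0 hvf]
            rw [← lift_lift (down 0 f) 0 c (by omega), down_lift]
          rw [hdl, IH (down 0 f) (by rw [size_down]; omega) c]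


theorem AV : ∀ N t, size t ≤ N →
    (∀ x, size x ≤ size t → ∀ y, Par x y → Par y (cd x)) →
    ∀ p q s, Par t p → Par q s →
    Par (app p q) (subst 0 s (cd (app (lift 0 t) (var 0)))) := by
  intro N
  induction N with
  | zero => intro t ht; exact absurd (lt_of_lt_of_le (size_pos t) ht) (by omega)
  | succ N IH =>
    intro t ht IHt p q s hp hq
    cases t with
    | var n =>
      cases hp
      have e : subst 0 s (cd (app (lift 0 (var n)) (var 0))) = app (var n) s := by
        show subst 0 s (cd (app (var (n+1)) (var 0))) = _
        rw [cd_app_var, cd_var]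
        simp only [subst]
        norm_num
      rw [e]
      exact Par.app (Par.var n) hq
    | app t1 t2 =>
      have e : subst 0 s (cd (app (lift 0 (app t1 t2)) (var 0))) = app (cd (app t1 t2)) s := by
        show subst 0 s (cd (app (app (lift 0 t1) (lift 0 t2)) (var 0))) = _
        rw [cd_app_app, cd_var]
        have e2 : cd (app (lift 0 t1) (lift 0 t2)) = lift 0 (cd (app t1 t2)) := by
          have := cd_lift (size (app t1 t2)) (app t1 t2) le_rfl 0
          simpa only [lift] using this
        rw [e2]
        simp [subst, subst_lift]
      rw [e]
      exact Par.app (IHt _ le_rfl p hp) hq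
    | lam u =>
      have e : cd (app (lift 0 (lam u)) (var 0)) = cd u := by
        show cd (app (lam (lift 1 u)) (var 0)) = cd u
        rw [cd_app_lam, cd_var, cd_lift (size u) u le_rfl 1]
        exact subst_var_lift (cd u) 0
      rw [e]
      cases hp with
      | lam hu =>
        exact Par.beta (IHt u (by simp [size]) _ hu) hq
      | @eta w _ hw =>
        have hsw : size w ≤ N := by
          simp [size, size_lift] at ht
          omega
        exact IH w hsw (fun x hx => IHt x (le_trans hx (by simp [size, size_lift]; omega)))
          p q s hw hq

theorem triangle : ∀ N a, size a ≤ N → ∀ b, Par a b → Par b (cd a) := by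
  intro N
  induction N with
  | zero => intro a ha; exact absurd (lt_of_lt_of_le (size_pos a) ha) (by omega)
  | succ N IH =>
    intro a ha b hb
    cases hb with
    | var n => rw [cd_var]; exact Par.var n
    | @app a1 a1' a2 a2' h1 h2 =>
      cases a1 with
      | var n =>
        cases h1
        rw [cd_app_var]
        exact Par.app (Par.var n) (IH a2 (by simp [size] at ha; omega) _ h2)
      | app b1 b2 =>
        rw [cd_app_app]
        exact Par.app (IH _ (by simp [size] at ha ⊢; omega) _ h1)
          (IH a2 (by simp [size] at ha; omega) _ h2)
      | lam m =>
        rw [cd_app_lam]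
        cases h1 with
        | lam hm =>
          exact Par.beta (IH m (by simp [size] at ha; omega) _ hm)
            (IH a2 (by simp [size] at ha; omega) _ h2)
        | @eta w _ hw =>
          exact AV (size w) w le_rfl
            (fun x hx y hy => IH x (by simp [size, size_lift] at ha; omega) y hy)
            a1' a2' (cd a2) hw (IH a2 (by simp [size, size_lift] at ha; omega) _ h2)
    | @lam m m' hm =>
      match hE : etaF? m with
      | none =>
        rw [cd_lam_plain m hE]
        exact Par.lam (IH m (by simp [size] at ha; omega) _ hm)
      | some f =>
        have hmf := etaF?_some hE
        subst hmf
        cases hvf : hasVar 0 f with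
        | true =>
          rw [cd_lam_eta' f hvf]
          exact Par.lam (IH _ (by simp [size] at ha ⊢; omega) _ hm)
        | false =>
          rw [cd_lam_eta f hvf]
          cases hm with
          | @app _ f' _ v' hf hv =>
            cases hv
            obtain ⟨f0', hb, hp⟩ := par_lift_inv hf 0 (down 0 f) (lift_down f 0 hvf).symm
            subst hb
            exact Par.eta (IH (down 0 f)
              (by rw [size_down]; simp [size] at ha; omega) f0' hp)
          | @beta w w' _ v' hw hv =>
            cases hv
            have hw1 : hasVar 1 w = false := hvf
            obtain ⟨w0', hb, hp⟩ := par_lift_inv hw 1 (down 1 w) (lift_down w 1 hw1).symm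
            subst hb
            have e : subst 0 (var 0) (lift 1 w0') = w0' := subst_var_lift w0' 0
            rw [e]
            have e2 : down 0 (lam w) = lam (down 1 w) := rfl
            rw [e2]
            exact IH (lam (down 1 w))
              (by simp [size, size_down] at ha ⊢; omega) (lam w0') (Par.lam hp)
    | @beta m m' n n' hm hn =>
      rw [cd_app_lam]
      exact par_subst (IH m (by simp [size] at ha; omega) _ hm) 0
        (IH n (by simp [size] at ha; omega) _ hn)
    | @eta t _ ht =>
      rw [cd_lam_eta _ (hasVar_lift_self t 0), down_lift t 0]
      exact IH t (by simp [size, size_lift] at ha; omega) b ht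


open Relation

theorem par_cd {a b : Lam} (h : Par a b) : Par b (cd a) :=
  triangle (size a) a le_rfl b h

theorem rtg_appL {a a' : Lam} (b : Lam) (h : ReflTransGen Step a a') :
    ReflTransGen Step (app a b) (app a' b) := by
  induction h with
  | refl => exact .refl
  | tail _ h ih => exact ih.tail (Step.appL b h)

theorem rtg_appR (a : Lam) {b b' : Lam} (h : ReflTransGen Step b b') :
    ReflTransGen Step (app a b) (app a b') := by
  induction h with
  | refl => exact .refl
  | tail _ h ih => exact ih.tail (Step.appR a h)

theorem rtg_lam {a a' : Lam} (h : ReflTransGen Step a a') :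
    ReflTransGen Step (lam a) (lam a') := by
  induction h with
  | refl => exact .refl
  | tail _ h ih => exact ih.tail (Step.xi h)

theorem par_rtg {a b : Lam} (h : Par a b) : ReflTransGen Step a b := by
  induction h with
  | var n => exact .refl
  | app _ _ iha ihb => exact (rtg_appL _ iha).trans (rtg_appR _ ihb)
  | lam _ ih => exact rtg_lam ih
  | @beta a a' b b' _ _ iha ihb =>
    exact ((rtg_appL _ (rtg_lam iha)).trans (rtg_appR _ ihb)).tail (Step.beta a' b')
  | @eta a a' _ ih => exact (ReflTransGen.single (Step.eta a)).trans ih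

theorem rtgPar_rtgStep {a b : Lam} (h : ReflTransGen Par a b) : ReflTransGen Step a b := by
  induction h with
  | refl => exact .refl
  | tail _ h ih => exact ih.trans (par_rtg h)

theorem join_equiv : Equivalence (Join (ReflTransGen Par)) :=
  equivalence_join_reflTransGen (fun a b c hb hc =>
    ⟨cd a, ReflGen.single (par_cd hb), ReflTransGen.single (par_cd hc)⟩)

theorem betaEta_join {a b : Lam} (h : BetaEtaEq a b) :
    Join (ReflTransGen Step) a b := by
  have h2 : Join (ReflTransGen Par) a b := by
    induction h with
    | rel x y hxy => exact ⟨y, ReflTransGen.single (step_par hxy), ReflTransGen.refl⟩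
    | refl x => exact join_equiv.refl x
    | symm x y _ ih => exact join_equiv.symm ih
    | trans x y z _ _ ih1 ih2 => exact join_equiv.trans ih1 ih2
  obtain ⟨c, h1, h2⟩ := h2
  exact ⟨c, rtgPar_rtgStep h1, rtgPar_rtgStep h2⟩

theorem rtg_normal {a b : Lam} (hn : ∀ c, ¬ Step a c) (h : ReflTransGen Step a b) :
    b = a := by
  rcases h.cases_head with h | ⟨c, hc, _⟩
  · exact h.symm
  · exact absurd hc (hn c)

theorem rtg_eqv {a b : Lam} (h : ReflTransGen Step a b) : BetaEtaEq a b := by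
  induction h with
  | refl => exact EqvGen.refl _
  | tail _ h ih => exact EqvGen.trans _ _ _ ih (EqvGen.rel _ _ h)

theorem eqv_appL {a a' : Lam} (b : Lam) (h : BetaEtaEq a a') :
    BetaEtaEq (app a b) (app a' b) := by
  induction h with
  | rel x y hxy => exact EqvGen.rel _ _ (Step.appL b hxy)
  | refl x => exact EqvGen.refl _
  | symm x y _ ih => exact EqvGen.symm _ _ ih
  | trans x y z _ _ ih1 ih2 => exact EqvGen.trans _ _ _ ih1 ih2


theorem step_lam_inv {m b : Lam} (h : Step (lam m) b) :
    (∃ m', b = lam m' ∧ Step m m') ∨ m = app (lift 0 b) (var 0) := by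
  cases h with
  | xi h2 => exact Or.inl ⟨_, rfl, h2⟩
  | eta => exact Or.inr rfl


end Lam

open Lam

/-- The O combinator λx.λy. y (x y). -/
def O : Lam := lam (lam (app (var 0) (app (var 1) (var 0))))

/-- Body (under λx., so x = var 0) of the normal form of O_(n+1):
n-fold application of x to λy. y (x y). -/
def Obody : ℕ → Lam
  | 0 => lam (app (var 0) (app (var 1) (var 0)))
  | n + 1 => app (var 0) (Obody n)

open Relation

theorem no_step_obody : ∀ n {b : Lam}, ¬ Step (Obody n) b := by
  intro n
  induction n with
  | zero =>
    intro b h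
    rcases step_lam_inv h with ⟨m', _, h2⟩ | heq
    · cases h2 with
      | appL _ h3 => cases h3
      | appR _ h3 =>
        cases h3 with
        | appL _ h4 => cases h4
        | appR _ h4 => cases h4
    · simp at heq
  | succ n ih =>
    intro b h
    cases h with
    | appL _ h2 => cases h2
    | appR _ h2 => exact ih h2

theorem obody_ne_var : ∀ n k, Obody n ≠ var k := by
  intro n k h
  cases n <;> simp [Obody] at h

theorem no_step_lam_obody : ∀ n {b : Lam}, ¬ Step (lam (Obody n)) b := by
  intro n b h
  rcases step_lam_inv h with ⟨m', _, h2⟩ | heq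
  · exact no_step_obody n h2
  · cases n with
    | zero => simp [Obody] at heq
    | succ m =>
      simp only [Obody] at heq
      obtain ⟨h1, h2⟩ := Lam.app.inj heq
      exact obody_ne_var m 0 h2

theorem obody_inj : ∀ i j, Obody i = Obody j → i = j := by
  intro i
  induction i with
  | zero =>
    intro j h
    cases j with
    | zero => rfl
    | succ j => simp [Obody] at h
  | succ i ih =>
    intro j h
    cases j with
    | zero => simp [Obody] at h
    | succ j =>
      simp only [Obody] at h
      obtain ⟨h1, h2⟩ := Lam.app.inj h
      rw [ih j h2]

theorem obody_lift : ∀ n c, lift (c+1) (Obody n) = Obody n := by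
  intro n
  induction n with
  | zero => intro c; simp [Obody, lift]
  | succ n ih => intro c; simp [Obody, lift, ih c]

theorem obody_subst0 : ∀ n, subst 0 (var 0) (Obody n) = Obody n := by
  intro n
  induction n with
  | zero => rfl
  | succ n ih => simp [Obody, subst, ih]

theorem subst_O_body (t : Lam) :
    subst 0 t (lam (app (var 0) (app (var 1) (var 0)))) =
      lam (app (var 0) (app (lift 0 t) (var 0))) := by
  simp [subst]

theorem stepA (n : ℕ) :
    ReflTransGen Step (app O (lam (Obody n))) (lam (Obody (n+1))) := by
  have s1 : Step (app O (lam (Obody n)))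
      (subst 0 (lam (Obody n)) (lam (app (var 0) (app (var 1) (var 0))))) :=
    Step.beta _ _
  have e1 : subst 0 (lam (Obody n)) (lam (app (var 0) (app (var 1) (var 0)))) =
      lam (app (var 0) (app (lam (Obody n)) (var 0))) := by
    rw [subst_O_body]
    show lam (app (var 0) (app (lam (lift 1 (Obody n))) (var 0))) = _
    rw [show lift 1 (Obody n) = Obody n from obody_lift n 0]
  rw [e1] at s1
  have s2 : Step (lam (app (var 0) (app (lam (Obody n)) (var 0))))
      (lam (app (var 0) (Obody n))) := by
    have hb : Step (app (lam (Obody n)) (var 0)) (subst 0 (var 0) (Obody n)) :=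
      Step.beta _ _
    rw [obody_subst0 n] at hb
    exact Step.xi (Step.appR (var 0) hb)
  exact (ReflTransGen.single s1).tail s2

theorem stepS : ∀ n, ReflTransGen Step (subst 0 O (Obody n)) (lam (Obody (n+1))) := by
  intro n
  induction n with
  | zero =>
    have e : subst 0 O (Obody 0) = lam (app (var 0) (app O (var 0))) := by rfl
    rw [e]
    have hb : Step (app O (var 0)) (Obody 0) := by
      have := Step.beta (lam (app (var 0) (app (var 1) (var 0)))) (var 0)
      exact this
    exact ReflTransGen.single (Step.xi (Step.appR (var 0) hb))
  | succ n ih =>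
    have e : subst 0 O (Obody (n+1)) = app O (subst 0 O (Obody n)) := by
      simp [Obody, subst]
    rw [e]
    exact (rtg_appR O ih).trans (stepA (n+1))

theorem part1 : ∀ n : ℕ, BetaEtaEq (flat O n) (lam (Obody n)) := by
  intro n
  induction n with
  | zero => exact EqvGen.refl _
  | succ n ih =>
    have t1 : BetaEtaEq (app (flat O n) O) (app (lam (Obody n)) O) := eqv_appL O ih
    have t2 : BetaEtaEq (app (lam (Obody n)) O) (subst 0 O (Obody n)) :=
      EqvGen.rel _ _ (Step.beta _ _)
    have t3 : BetaEtaEq (subst 0 O (Obody n)) (lam (Obody (n+1))) := rtg_eqv (stepS n)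
    exact EqvGen.trans _ _ _ t1 (EqvGen.trans _ _ _ t2 t3)


/-- For every n ≥ 0, O_(n+1) is βη-equivalent to λx. x (x (… (x (λy. y (x y)))…))
with n applications of x; hence O does not have the ρ-property.
(Here `flat O n = O_(n+1)`.) -/
theorem stmt10 :
    (∀ n : ℕ, BetaEtaEq (flat O n) (lam (Obody n))) ∧
    ¬ ∃ i j : ℕ, i ≠ j ∧ BetaEtaEq (flat O i) (flat O j) := by
  refine ⟨part1, ?_⟩
  rintro ⟨i, j, hne, hij⟩
  have h1 : BetaEtaEq (lam (Obody i)) (lam (Obody j)) :=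
    Relation.EqvGen.trans _ _ _ (Relation.EqvGen.symm _ _ (part1 i))
      (Relation.EqvGen.trans _ _ _ hij (part1 j))
  obtain ⟨c, hc1, hc2⟩ := betaEta_join h1
  have e1 := rtg_normal (fun x => no_step_lam_obody i) hc1
  have e2 := rtg_normal (fun x => no_step_lam_obody j) hc2
  have e3 : Obody i = Obody j := Lam.lam.inj (e1.symm.trans e2)
  exact hne (obody_inj i j e3)
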